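/- Let H ≠ ℕ be a numerical semigroup with Frobenius number f = f(H), let k be a field, and set R = k[[H]]. If f − 1 ∈ QF(H), then for every n ≥ f one has ω_Hⁿ = k[[t]] (equality of R-submodules of k[[t]]). -/

import Mathlib

set_option synthInstance.maxHeartbeats 400000
set_option maxHeartbeats 1000000

/-- The Frobenius number of a numerical semigroup `H ⊆ ℕ`: the largest natural number
not in `H` (meaningful when `H ≠ ℕ` and the complement of `H` is finite). -/
noncomputable def frobeniusNumber (H : AddSubmonoid ℕ) : ℕ :=
  sSup {x : ℕ | x ∉ H}

/-- The set of quasi-Frobenius numbers of a numerical semigroup `H`: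
`QF(H) = {x ∈ ℕ \ H : x + h ∈ H for every nonzero h ∈ H}`. -/
def QF (H : AddSubmonoid ℕ) : Set ℕ :=
  {x | x ∉ H ∧ ∀ h ∈ H, h ≠ 0 → x + h ∈ H}

/-- The semigroup power series ring `k[[H]]`: the subalgebra of `k[[t]]` of power series
whose `i`-th coefficient vanishes for all `i ∉ H`. -/
noncomputable def semigroupAlgebra (k : Type*) [Field k] (H : AddSubmonoid ℕ) :
    Subalgebra k (PowerSeries k) where
  carrier := {g | ∀ i : ℕ, i ∉ H → PowerSeries.coeff (R := k) i g = 0}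
  mul_mem' := by
    intro a b ha hb i hi
    rw [PowerSeries.coeff_mul]
    refine Finset.sum_eq_zero ?_
    rintro ⟨p, q⟩ hpq
    replace hpq : p + q = i := Finset.HasAntidiagonal.mem_antidiagonal.mp hpq
    dsimp only
    by_cases hp : p ∈ H
    · by_cases hq : q ∈ H
      · exact absurd (hpq ▸ H.add_mem hp hq) hi
      · rw [hb q hq, mul_zero]
    · rw [ha p hp, zero_mul]
  one_mem' := by
    intro i hi
    have h0 : i ≠ 0 := fun h => hi (h ▸ H.zero_mem)
    rw [PowerSeries.coeff_one, if_neg h0]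
  add_mem' := by
    intro a b ha hb i hi
    rw [map_add, ha i hi, hb i hi, add_zero]
  zero_mem' := by
    intro i hi
    rw [map_zero]
  algebraMap_mem' := by
    intro r i hi
    have h0 : i ≠ 0 := fun h => hi (h ▸ H.zero_mem)
    simp only [PowerSeries.algebraMap_apply, PowerSeries.coeff_C, if_neg h0]

/-- The canonical module `ω_H` of `k[[H]]`: the `k[[H]]`-submodule of `k[[t]]`
generated by the monomials `t^(f(H) - x)` for `x ∈ QF(H)`. -/
noncomputable def canonicalModule (k : Type*) [Field k] (H : AddSubmonoid ℕ) :
    Submodule ↥(semigroupAlgebra k H) (PowerSeries k) :=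
  Submodule.span ↥(semigroupAlgebra k H)
    ((fun x => (PowerSeries.X : PowerSeries k) ^ (frobeniusNumber H - x)) '' QF H)

/-! Since both `f` and `f - 1` are quasi-Frobenius numbers, `ω_H` contains `t⁰ = 1` and `t¹ = t`,
so `ω_Hⁿ` contains every `tᵐ` with `m ≤ n`, in particular every `tᵐ` with `m ≤ f`. As all gaps of
`H` are at most `f`, a power series minus its truncation at degree `f` lies in `k[[H]]`, hence
every power series lies in the `k[[H]]`-module `ω_Hⁿ`. -/

open PowerSeries

section Frobenius

variable {H : AddSubmonoid ℕ}

theorem le_frobeniusNumber (hfin : ((H : Set ℕ)ᶜ).Finite) {x : ℕ} (hx : x ∉ H) :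
    x ≤ frobeniusNumber H :=
  le_csSup hfin.bddAbove hx

theorem frobeniusNumber_notMem (hfin : ((H : Set ℕ)ᶜ).Finite) {x : ℕ} (hx : x ∉ H) :
    frobeniusNumber H ∉ H :=
  Nat.sSup_mem ⟨x, hx⟩ hfin.bddAbove

theorem frobeniusNumber_mem_QF (hfin : ((H : Set ℕ)ᶜ).Finite) {x : ℕ} (hx : x ∉ H) :
    frobeniusNumber H ∈ QF H := by
  refine ⟨frobeniusNumber_notMem hfin hx, fun h _ hh0 => ?_⟩
  by_contra hgap
  have := le_frobeniusNumber hfin hgap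
  omega

end Frobenius

theorem X_pow_mem_canonicalModule (k : Type*) [Field k] {H : AddSubmonoid ℕ} {x : ℕ}
    (hx : x ∈ QF H) : (X : PowerSeries k) ^ (frobeniusNumber H - x) ∈ canonicalModule k H :=
  Submodule.subset_span ⟨x, hx, rfl⟩

theorem Submodule.pow_mem_pow_of_le {R A : Type*} [CommSemiring R] [Semiring A] [Algebra R A]
    {M : Submodule R A} (hM : 1 ∈ M) {a : A} (ha : a ∈ M) {m n : ℕ} (hmn : m ≤ n) :
    a ^ m ∈ M ^ n :=
  pow_le_pow_right' (Submodule.one_le.mpr hM) hmn (Submodule.pow_mem_pow M ha m)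

section SemigroupAlgebra

variable {k : Type*} [Field k] {H : AddSubmonoid ℕ}

theorem sub_trunc_mem_semigroupAlgebra {d : ℕ} (hd : ∀ i ∉ H, i < d) (g : PowerSeries k) :
    g - trunc d g ∈ semigroupAlgebra k H := by
  intro i hi
  rw [map_sub, Polynomial.coeff_coe, coeff_trunc, if_pos (hd i hi), sub_self]

theorem Submodule.eq_top_of_one_mem_of_X_pow_mem
    {N : Submodule (semigroupAlgebra k H) (PowerSeries k)} {d : ℕ} (hd : ∀ i ∉ H, i < d)
    (h1 : 1 ∈ N) (hX : ∀ m < d, (X : PowerSeries k) ^ m ∈ N) : N = ⊤ := by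
  have hmul : ∀ r ∈ semigroupAlgebra k H, ∀ x ∈ N, r * x ∈ N := fun r hr x hx =>
    N.smul_mem (⟨r, hr⟩ : semigroupAlgebra k H) hx
  have htrunc : ∀ g : PowerSeries k, (trunc d g : PowerSeries k) ∈ N := by
    intro g
    rw [← Polynomial.coeToPowerSeries.ringHom_apply, trunc_apply, map_sum]
    refine N.sum_mem fun m hm => ?_
    rw [Polynomial.coeToPowerSeries.ringHom_apply, Polynomial.coe_monomial,
      monomial_eq_C_mul_X_pow]
    exact hmul _ ((semigroupAlgebra k H).algebraMap_mem _) _ (hX m (Finset.mem_Ico.mp hm).2)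
  refine eq_top_iff.mpr fun g _ => ?_
  have hrest := hmul _ (sub_trunc_mem_semigroupAlgebra hd g) 1 h1
  simpa using N.add_mem hrest (htrunc g)

end SemigroupAlgebra

theorem stmt10_general (k : Type*) [Field k] (H : AddSubmonoid ℕ)
    (hfin : ((H : Set ℕ)ᶜ).Finite)
    (hqf : frobeniusNumber H - 1 ∈ QF H) :
    ∀ n : ℕ, frobeniusNumber H ≤ n → canonicalModule k H ^ n = ⊤ := by
  intro n hn
  have hfQF : frobeniusNumber H ∈ QF H := frobeniusNumber_mem_QF hfin hqf.1
  have hf0 : frobeniusNumber H ≠ 0 := fun h => hfQF.1 (h ▸ H.zero_mem)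
  have h1 : (1 : PowerSeries k) ∈ canonicalModule k H := by
    simpa using X_pow_mem_canonicalModule k hfQF
  have hX : (X : PowerSeries k) ∈ canonicalModule k H := by
    simpa [Nat.sub_sub_self (Nat.one_le_iff_ne_zero.mpr hf0)] using
      X_pow_mem_canonicalModule k hqf
  refine Submodule.eq_top_of_one_mem_of_X_pow_mem
    (fun i hi => Nat.lt_succ_of_le (le_frobeniusNumber hfin hi)) ?_ fun m hm => ?_
  · simpa using Submodule.pow_mem_pow _ h1 n
  · exact Submodule.pow_mem_pow_of_le h1 hX (by omega)

/-- Let `H ≠ ℕ` be a numerical semigroup with Frobenius number `f` and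
`R = k[[H]]`. If `f - 1 ∈ QF(H)`, then `ω_Hⁿ = k[[t]]` for every `n ≥ f`. -/
theorem stmt10 (k : Type*) [Field k] (H : AddSubmonoid ℕ)
    (hfin : ((H : Set ℕ)ᶜ).Finite) (hne : H ≠ ⊤)
    (hqf : frobeniusNumber H - 1 ∈ QF H) :
    ∀ n : ℕ, frobeniusNumber H ≤ n → canonicalModule k H ^ n = ⊤ :=
  stmt10_general k H hfin hqf
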